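/- Lemma 2.3(ii): Re ξ is increasing in the modulus and decreasing in the absolute value of the argument: for all 0 < r₁ ≤ r₂ and θ with |θ| ≤ π/4, Re ξ(r₁ e^{iθ}) ≤ Re ξ(r₂ e^{iθ}); and for all r > 0 and 0 ≤ θ₁ ≤ θ₂ ≤ π/4, Re ξ(r e^{iθ₂}) ≤ Re ξ(r e^{iθ₁}) and Re ξ(r e^{−iθ₂}) ≤ Re ξ(r e^{−iθ₁}). -/

import Mathlib

/-! On the right half-plane `ξ` is holomorphic with `ξ'(z) = √(1+z²)/z`. Along the ray
`t ↦ t e^{iθ}` the derivative of `Re ξ` is therefore `Re √(1+z²) / t ≥ 0`, and along the arc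
`θ ↦ r e^{iθ}` it is `-Im √(1+z²)`, which is `≤ 0` as soon as `Im (1+z²) = 2 Re z Im z ≥ 0`.
Negative arguments reduce to positive ones through `ξ(z̄) = conj ξ(z)`. -/

open Real

noncomputable section

def xi (z : ℂ) : ℂ :=
  (1 + z ^ 2) ^ ((1 : ℂ) / 2) + Complex.log (z / (1 + (1 + z ^ 2) ^ ((1 : ℂ) / 2)))

open Complex ComplexConjugate Set

lemma monotoneOn_of_forall_hasDerivAt_nonneg {s : Set ℝ} (hs : Convex ℝ s) {f f' : ℝ → ℝ}
    (hf : ∀ x ∈ s, HasDerivAt f (f' x) x) (hf' : ∀ x ∈ s, 0 ≤ f' x) : MonotoneOn f s :=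
  monotoneOn_of_hasDerivWithinAt_nonneg hs (fun x hx ↦ (hf x hx).continuousAt.continuousWithinAt)
    (fun x hx ↦ (hf x (interior_subset hx)).hasDerivWithinAt) fun x hx ↦ hf' x (interior_subset hx)

lemma antitoneOn_of_forall_hasDerivAt_nonpos {s : Set ℝ} (hs : Convex ℝ s) {f f' : ℝ → ℝ}
    (hf : ∀ x ∈ s, HasDerivAt f (f' x) x) (hf' : ∀ x ∈ s, f' x ≤ 0) : AntitoneOn f s :=
  antitoneOn_of_hasDerivWithinAt_nonpos hs (fun x hx ↦ (hf x hx).continuousAt.continuousWithinAt)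
    (fun x hx ↦ (hf x (interior_subset hx)).hasDerivWithinAt) fun x hx ↦ hf' x (interior_subset hx)

namespace Complex

lemma re_cpow_one_half_nonneg (u : ℂ) : 0 ≤ (u ^ ((1 : ℂ) / 2)).re := by
  rw [one_div, cpow_inv_two_re]
  exact Real.sqrt_nonneg _

lemma im_cpow_one_half_nonneg {u : ℂ} (hu : 0 ≤ u.im) : 0 ≤ (u ^ ((1 : ℂ) / 2)).im := by
  rw [one_div, cpow_inv_two_im_eq_sqrt hu]
  exact Real.sqrt_nonneg _

lemma one_add_sq_mem_slitPlane {z : ℂ} (hz : 0 < z.re) : 1 + z ^ 2 ∈ slitPlane := by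
  rw [mem_slitPlane_iff]
  by_cases him : z.im = 0
  · left
    simp only [add_re, one_re, sq, mul_re, him, mul_zero, sub_zero]
    positivity
  · right
    have : z.re * z.im ≠ 0 := mul_ne_zero hz.ne' him
    simp only [add_im, one_im, sq, mul_im]
    contrapose! this
    linarith

lemma div_mem_slitPlane_of_re_pos {z v : ℂ} (hz : 0 < z.re) (hv : 0 < v.re) :
    z / v ∈ slitPlane := by
  rw [mem_slitPlane_iff]
  by_contra! h
  have hzv : z = z / v * v := (div_mul_cancel₀ z (ne_of_apply_ne re hv.ne')).symm
  have : z.re = (z / v).re * v.re := by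
    conv_lhs => rw [hzv]
    simp [mul_re, h.2]
  nlinarith

lemma ofReal_mul_exp_I_mul_re (r θ : ℝ) : ((r : ℂ) * exp (I * θ)).re = r * Real.cos θ := by
  simp [exp_re]

lemma ofReal_mul_exp_I_mul_im (r θ : ℝ) : ((r : ℂ) * exp (I * θ)).im = r * Real.sin θ := by
  simp [exp_im]

lemma ofReal_mul_exp_neg_I_mul (r θ : ℝ) :
    (r : ℂ) * exp (-(I * θ)) = conj ((r : ℂ) * exp (I * θ)) := by
  simp [← exp_conj]

end Complex

lemma hasDerivAt_xi {z : ℂ} (hz : 0 < z.re) :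
    HasDerivAt xi ((1 + z ^ 2) ^ ((1 : ℂ) / 2) / z) z := by
  set w := (1 + z ^ 2) ^ ((1 : ℂ) / 2) with hw_def
  have hz0 : z ≠ 0 := ne_of_apply_ne re hz.ne'
  have hw_sq : w ^ 2 = 1 + z ^ 2 := by rw [hw_def, one_div, cpow_ofNat_inv_pow]
  have hw0 : w ≠ 0 := by
    rintro hw
    apply slitPlane_ne_zero (one_add_sq_mem_slitPlane hz)
    rw [← hw_sq, hw, zero_pow two_ne_zero]
  have h1w : 0 < (1 + w).re := by
    simp only [add_re, one_re]
    linarith [re_cpow_one_half_nonneg (1 + z ^ 2)]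
  have h1w0 : 1 + w ≠ 0 := ne_of_apply_ne re h1w.ne'
  have hsqrt : HasDerivAt (fun z : ℂ ↦ (1 + z ^ 2) ^ ((1 : ℂ) / 2)) (z / w) z := by
    convert ((hasDerivAt_pow 2 z).const_add 1).cpow_const (one_add_sq_mem_slitPlane hz)
      using 1
    rw [show (1 : ℂ) / 2 - 1 = -(1 / 2) by norm_num, cpow_neg, ← hw_def]
    field_simp
    ring
  have hlog := ((hasDerivAt_id z).div (hsqrt.const_add 1) h1w0).clog
    (div_mem_slitPlane_of_re_pos hz h1w)
  refine HasDerivAt.congr_deriv (f := xi) (hsqrt.add hlog) ?_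
  simp only [id, Pi.div_apply, ← hw_def]
  field_simp
  linear_combination (-w) * hw_sq

lemma xi_conj {z : ℂ} (hz : 0 < z.re) : xi (conj z) = conj (xi z) := by
  have h1w : 0 < (1 + (1 + z ^ 2) ^ ((1 : ℂ) / 2)).re := by
    simp only [add_re, one_re]
    linarith [re_cpow_one_half_nonneg (1 + z ^ 2)]
  have hsqrt_arg := (mem_slitPlane_iff_arg.mp (one_add_sq_mem_slitPlane hz)).1
  have hlog_arg := (mem_slitPlane_iff_arg.mp (div_mem_slitPlane_of_re_pos hz h1w)).1
  have hsqrt : (1 + conj z ^ 2) ^ ((1 : ℂ) / 2) = conj ((1 + z ^ 2) ^ ((1 : ℂ) / 2)) := by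
    have := conj_cpow _ ((1 : ℂ) / 2) hsqrt_arg
    simp only [map_add, map_one, map_pow, map_div₀, map_ofNat] at this
    exact this
  unfold xi
  rw [hsqrt, map_add, ← log_conj _ hlog_arg, map_div₀, map_add, map_one]

lemma HasDerivAt.re_xi {γ : ℝ → ℂ} {γ' : ℂ} {t : ℝ} (hγ : HasDerivAt γ γ' t)
    (ht : 0 < (γ t).re) :
    HasDerivAt (fun s ↦ (xi (γ s)).re) ((γ' * (1 + γ t ^ 2) ^ ((1 : ℂ) / 2) / γ t).re) t := by
  have := reCLM.hasFDerivAt.comp_hasDerivAt t ((hasDerivAt_xi ht).comp t hγ)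
  simpa [Function.comp_def, mul_div_assoc, mul_comm] using this

lemma ofReal_mul_exp_I_mul_re_pos {r θ : ℝ} (hr : 0 < r) (hθ : |θ| < π / 2) :
    0 < ((r : ℂ) * exp (I * θ)).re := by
  rw [ofReal_mul_exp_I_mul_re]
  exact mul_pos hr (Real.cos_pos_of_mem_Ioo (abs_lt.mp hθ))

lemma re_xi_ofReal_mul_exp_neg_I_mul {r θ : ℝ} (hr : 0 < r) (hθ : |θ| < π / 2) :
    (xi (r * exp (-(I * θ)))).re = (xi (r * exp (I * θ))).re := by
  rw [ofReal_mul_exp_neg_I_mul, xi_conj (ofReal_mul_exp_I_mul_re_pos hr hθ), conj_re]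

lemma re_xi_monotoneOn_ray {θ : ℝ} (hθ : |θ| < π / 2) :
    MonotoneOn (fun r : ℝ ↦ (xi (r * exp (I * θ))).re) (Ioi 0) := by
  set e := exp (I * θ)
  have he : e ≠ 0 := exp_ne_zero _
  refine monotoneOn_of_forall_hasDerivAt_nonneg (convex_Ioi 0)
    (fun r hr ↦ ((hasDerivAt_id (r : ℂ)).comp_ofReal.mul_const e).re_xi
      (ofReal_mul_exp_I_mul_re_pos hr hθ)) fun r (hr : 0 < r) ↦ ?_
  simp only [id, one_mul]
  rw [mul_comm (r : ℂ) e, mul_div_mul_left _ _ he, div_ofReal_re]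
  exact div_nonneg (re_cpow_one_half_nonneg _) hr.le

lemma re_xi_antitoneOn_arc {r : ℝ} (hr : 0 < r) :
    AntitoneOn (fun θ : ℝ ↦ (xi (r * exp (I * θ))).re) (Ico 0 (π / 2)) := by
  have habs : ∀ θ ∈ Ico 0 (π / 2), |θ| < π / 2 := fun θ hθ ↦
    abs_lt.mpr ⟨by linarith [hθ.1, pi_pos], hθ.2⟩
  have hγ (θ : ℝ) : HasDerivAt (fun t : ℝ ↦ (r : ℂ) * exp (I * t))
      ((r : ℂ) * (exp (I * θ) * I)) θ :=
    (((hasDerivAt_id (θ : ℂ)).const_mul I).comp_ofReal.cexp.const_mul (r : ℂ)).congr_deriv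
      (by simp)
  refine antitoneOn_of_forall_hasDerivAt_nonpos (convex_Ico 0 (π / 2))
    (fun θ hθ' ↦ (hγ θ).re_xi (ofReal_mul_exp_I_mul_re_pos hr (habs θ hθ'))) fun θ hθ' ↦ ?_
  set z := (r : ℂ) * exp (I * θ) with hz
  have hz0 : z ≠ 0 := mul_ne_zero (ofReal_ne_zero.mpr hr.ne') (exp_ne_zero _)
  have hre : 0 ≤ z.re := (ofReal_mul_exp_I_mul_re_pos hr (habs θ hθ')).le
  have him : 0 ≤ z.im := by
    rw [hz, ofReal_mul_exp_I_mul_im]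
    exact mul_nonneg hr.le
      (Real.sin_nonneg_of_nonneg_of_le_pi hθ'.1 (by linarith [hθ'.2, pi_pos]))
  have hsq_im : 0 ≤ (1 + z ^ 2).im := by
    simp only [add_im, one_im, sq, mul_im]
    nlinarith
  have hderiv : (r : ℂ) * (exp (I * θ) * I) * (1 + z ^ 2) ^ ((1 : ℂ) / 2) / z =
      I * (1 + z ^ 2) ^ ((1 : ℂ) / 2) := by
    field_simp
    ring
  rw [hderiv, I_mul_re, neg_nonpos]
  exact im_cpow_one_half_nonneg hsq_im

/-- Lemma 2.3(ii): `Re ξ` is increasing in the modulus and decreasing in the absolute value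
of the argument (for arguments with `|arg z| ≤ π/4`). -/
theorem xi_re_monotone :
    (∀ r₁ r₂ θ : ℝ, 0 < r₁ → r₁ ≤ r₂ → |θ| ≤ π / 4 →
        (xi (r₁ * Complex.exp (Complex.I * θ))).re ≤
          (xi (r₂ * Complex.exp (Complex.I * θ))).re) ∧
    (∀ r θ₁ θ₂ : ℝ, 0 < r → 0 ≤ θ₁ → θ₁ ≤ θ₂ → θ₂ ≤ π / 4 →
        (xi (r * Complex.exp (Complex.I * θ₂))).re ≤
            (xi (r * Complex.exp (Complex.I * θ₁))).re ∧
          (xi (r * Complex.exp (-(Complex.I * θ₂)))).re ≤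
            (xi (r * Complex.exp (-(Complex.I * θ₁)))).re) := by
  have hπ := pi_pos
  refine ⟨fun r₁ r₂ θ hr₁ hr₁₂ hθ ↦ ?_, fun r θ₁ θ₂ hr hθ₁ hθ₁₂ hθ₂ ↦ ?_⟩
  · exact re_xi_monotoneOn_ray (by linarith) hr₁ (hr₁.trans_le hr₁₂) hr₁₂
  · have harc : (xi (r * exp (I * θ₂))).re ≤ (xi (r * exp (I * θ₁))).re :=
      re_xi_antitoneOn_arc hr ⟨hθ₁, by linarith⟩ ⟨hθ₁.trans hθ₁₂, by linarith⟩ hθ₁₂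
    refine ⟨harc, ?_⟩
    rwa [re_xi_ofReal_mul_exp_neg_I_mul hr (abs_lt.mpr ⟨by linarith, by linarith⟩),
      re_xi_ofReal_mul_exp_neg_I_mul hr (abs_lt.mpr ⟨by linarith, by linarith⟩)]
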